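/- Let σ be a positive definite density matrix in M_n(ℂ) and let K : M_n(ℂ) → M_n(ℂ) be a linear map commuting with Δ_σ(A) = σAσ⁻¹. If K is self-adjoint with respect to ⟨A,B⟩_f = Tr[σ A* f(Δ_σ)(B)] for some function f : (0,∞) → (0,∞) (evaluated by functional calculus on the positive operator Δ_σ), then K is self-adjoint with respect to ⟨·,·⟩_g for every function g : (0,∞) → (0,∞). -/

import Mathlib

/-!
`f(Δ_σ)` acts on the entries of `U* A U` as the multiplier `f(d_i/d_j)`, so `f ↦ f(Δ_σ)` is
multiplicative and `f(Δ_σ)` only depends on `f` at the finitely many ratios `d_i/d_j`. By Lagrange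
interpolation every `f(Δ_σ)` is therefore a polynomial in `Δ_σ`, hence commutes with `K`.
As `f` does not vanish on `(0, ∞)`, `g(Δ_σ) = f(Δ_σ) ∘ (g/f)(Δ_σ)`, and
`⟨KA, B⟩_g = ⟨KA, (g/f)(Δ_σ) B⟩_f = ⟨A, K (g/f)(Δ_σ) B⟩_f = ⟨A, (g/f)(Δ_σ) K B⟩_f = ⟨A, KB⟩_g`.
-/
open Matrix
open scoped ComplexOrder

/-- The functional calculus `f(Δ_σ)` for the modular operator `Δ_σ(A) = σ A σ⁻¹` of a
positive definite matrix `σ`, defined via the spectral decomposition of `σ`: if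
`σ = U diag(d) U*`, then `f(Δ_σ)(A) = U ((f(d_i/d_j))_{ij} ⊙ (U* A U)) U*`. -/
noncomputable def fDelta {n : ℕ} {σ : Matrix (Fin n) (Fin n) ℂ} (hσ : σ.PosDef)
    (f : ℝ → ℝ) (A : Matrix (Fin n) (Fin n) ℂ) : Matrix (Fin n) (Fin n) ℂ :=
  (hσ.1.eigenvectorUnitary : Matrix (Fin n) (Fin n) ℂ) *
    (Matrix.hadamard
      (Matrix.of fun i j => ((f (hσ.1.eigenvalues i / hσ.1.eigenvalues j) : ℝ) : ℂ))
      ((hσ.1.eigenvectorUnitary : Matrix (Fin n) (Fin n) ℂ)ᴴ * A *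
        (hσ.1.eigenvectorUnitary : Matrix (Fin n) (Fin n) ℂ))) *
    (hσ.1.eigenvectorUnitary : Matrix (Fin n) (Fin n) ℂ)ᴴ

namespace Matrix.IsHermitian

variable {𝕜 m : Type*} [RCLike 𝕜] [Fintype m] [DecidableEq m] {A : Matrix m m 𝕜}

theorem conjTranspose_eigenvectorUnitary_mul_self (hA : A.IsHermitian) :
    (hA.eigenvectorUnitary : Matrix m m 𝕜)ᴴ * hA.eigenvectorUnitary = 1 :=
  Unitary.coe_star_mul_self _

theorem eigenvectorUnitary_mul_conjTranspose_self (hA : A.IsHermitian) :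
    (hA.eigenvectorUnitary : Matrix m m 𝕜) * (hA.eigenvectorUnitary : Matrix m m 𝕜)ᴴ = 1 :=
  Unitary.coe_mul_star_self _

end Matrix.IsHermitian

open Polynomial

section

variable {n : ℕ} {σ : Matrix (Fin n) (Fin n) ℂ} (hσ : σ.PosDef)

theorem fDelta_mul (f g : ℝ → ℝ) (A : Matrix (Fin n) (Fin n) ℂ) :
    fDelta hσ (fun x => f x * g x) A = fDelta hσ f (fDelta hσ g A) := by
  have hU := hσ.1.conjTranspose_eigenvectorUnitary_mul_self
  simp only [fDelta, Matrix.mul_assoc, hU, Matrix.mul_one]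
  simp only [← Matrix.mul_assoc, hU, Matrix.one_mul]
  congr 2
  ext i j
  simp [mul_assoc]

theorem fDelta_add (f g : ℝ → ℝ) (A : Matrix (Fin n) (Fin n) ℂ) :
    fDelta hσ (fun x => f x + g x) A = fDelta hσ f A + fDelta hσ g A := by
  simp only [fDelta, ← Matrix.mul_add, ← Matrix.add_mul]
  congr 2
  ext i j
  simp [add_mul]

theorem fDelta_const (c : ℝ) (A : Matrix (Fin n) (Fin n) ℂ) :
    fDelta hσ (fun _ => c) A = (c : ℂ) • A := by
  have hU := hσ.1.eigenvectorUnitary_mul_conjTranspose_self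
  have hconst : ∀ M : Matrix (Fin n) (Fin n) ℂ,
      Matrix.hadamard (Matrix.of fun _ _ => (c : ℂ)) M = (c : ℂ) • M := fun M => by
    ext; simp
  simp only [fDelta, hconst, Matrix.mul_smul, Matrix.smul_mul, ← Matrix.mul_assoc, hU,
    Matrix.one_mul]
  simp only [Matrix.mul_assoc, hU, Matrix.mul_one]

theorem fDelta_congr {f g : ℝ → ℝ}
    (h : ∀ i j, f (hσ.1.eigenvalues i / hσ.1.eigenvalues j) =
      g (hσ.1.eigenvalues i / hσ.1.eigenvalues j)) :
    fDelta hσ f = fDelta hσ g := by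
  funext A
  simp only [fDelta, h]

theorem fDelta_id (A : Matrix (Fin n) (Fin n) ℂ) :
    fDelta hσ (fun x => x) A = σ * A * σ⁻¹ := by
  have hσ_det : IsUnit σ.det := (Matrix.isUnit_iff_isUnit_det σ).mp hσ.isUnit
  suffices fDelta hσ (fun x => x) A * σ = σ * A by
    rw [← this, Matrix.mul_assoc, Matrix.mul_nonsing_inv _ hσ_det, Matrix.mul_one]
  set U : Matrix (Fin n) (Fin n) ℂ := (hσ.1.eigenvectorUnitary : Matrix (Fin n) (Fin n) ℂ)
  set D : Matrix (Fin n) (Fin n) ℂ := diagonal (RCLike.ofReal ∘ hσ.1.eigenvalues)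
  set H : Matrix (Fin n) (Fin n) ℂ :=
    Matrix.of fun i j => ((hσ.1.eigenvalues i / hσ.1.eigenvalues j : ℝ) : ℂ)
  have hσUD : σ = U * D * Uᴴ := hσ.1.spectral_theorem
  have hU : ∀ X, Uᴴ * (U * X) = X := fun X => by
    rw [← Matrix.mul_assoc, hσ.1.conjTranspose_eigenvectorUnitary_mul_self, Matrix.one_mul]
  have hU' : U * Uᴴ = 1 := hσ.1.eigenvectorUnitary_mul_conjTranspose_self
  have hHD : ∀ M, Matrix.hadamard H M * D = D * M := by
    intro M
    ext i j
    have hj : (hσ.1.eigenvalues j : ℂ) ≠ 0 := by exact_mod_cast (hσ.eigenvalues_pos j).ne'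
    simp only [H, D, mul_diagonal, diagonal_mul, hadamard_apply, of_apply, Function.comp_apply,
      Complex.ofReal_div, Complex.coe_algebraMap]
    field_simp
  calc fDelta hσ (fun x => x) A * σ = U * Matrix.hadamard H (Uᴴ * A * U) * Uᴴ * (U * D * Uᴴ) := by
        rw [← hσUD]; rfl
    _ = U * (Matrix.hadamard H (Uᴴ * A * U) * D) * Uᴴ := by
        simp only [Matrix.mul_assoc, hU]
    _ = U * D * Uᴴ * A := by
        rw [hHD]
        simp only [Matrix.mul_assoc, hU', Matrix.mul_one]
    _ = σ * A := by rw [← hσUD]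

theorem fDelta_eq_fDelta_fDelta_div {f : ℝ → ℝ} (hf : ∀ x, 0 < x → f x ≠ 0) (g : ℝ → ℝ)
    (A : Matrix (Fin n) (Fin n) ℂ) :
    fDelta hσ g A = fDelta hσ f (fDelta hσ (fun x => g x / f x) A) := by
  rw [← fDelta_mul]
  refine congrFun (fDelta_congr hσ fun i j => (mul_div_cancel₀ _ (hf _ ?_)).symm) A
  exact div_pos (hσ.eigenvalues_pos i) (hσ.eigenvalues_pos j)

theorem exists_fDelta_eq_fDelta_eval (f : ℝ → ℝ) :
    ∃ p : ℝ[X], fDelta hσ f = fDelta hσ (fun x => p.eval x) := by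
  classical
  let ratios : Finset ℝ := Finset.univ.image fun ij : Fin n × Fin n =>
    hσ.1.eigenvalues ij.1 / hσ.1.eigenvalues ij.2
  refine ⟨Lagrange.interpolate ratios id f, fDelta_congr hσ fun i j => ?_⟩
  have hmem : hσ.1.eigenvalues i / hσ.1.eigenvalues j ∈ ratios :=
    Finset.mem_image_of_mem _ (Finset.mem_univ (i, j))
  exact (Lagrange.eval_interpolate_at_node f (Set.injOn_id _) hmem).symm

variable (K : Matrix (Fin n) (Fin n) ℂ →ₗ[ℂ] Matrix (Fin n) (Fin n) ℂ)

theorem map_fDelta_eval_of_map_fDelta_id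
    (hK : ∀ A, K (fDelta hσ (fun x => x) A) = fDelta hσ (fun x => x) (K A)) (p : ℝ[X])
    (A : Matrix (Fin n) (Fin n) ℂ) :
    K (fDelta hσ (fun x => p.eval x) A) = fDelta hσ (fun x => p.eval x) (K A) := by
  induction p using Polynomial.induction_on generalizing A with
  | C a => simp only [eval_C, fDelta_const, map_smul]
  | add p q hp hq => simp only [eval_add, fDelta_add, map_add, hp, hq]
  | monomial k a ih =>
    simp only [pow_succ, ← mul_assoc, eval_mul (q := X), eval_X, fDelta_mul, hK, ih]

theorem map_fDelta_of_commute (hK : ∀ A, K (σ * A * σ⁻¹) = σ * K A * σ⁻¹) (f : ℝ → ℝ)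
    (A : Matrix (Fin n) (Fin n) ℂ) : K (fDelta hσ f A) = fDelta hσ f (K A) := by
  obtain ⟨p, hp⟩ := exists_fDelta_eq_fDelta_eval hσ f
  rw [hp]
  exact map_fDelta_eval_of_map_fDelta_id hσ K (by simpa only [fDelta_id] using hK) p A

end

theorem selfAdjoint_f_implies_selfAdjoint_g_general {n : ℕ}
    (σ : Matrix (Fin n) (Fin n) ℂ) (hσ : σ.PosDef)
    (K : Matrix (Fin n) (Fin n) ℂ →ₗ[ℂ] Matrix (Fin n) (Fin n) ℂ)
    (hcomm : ∀ A, K (σ * A * σ⁻¹) = σ * K A * σ⁻¹)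
    (f : ℝ → ℝ) (hf : ∀ x : ℝ, 0 < x → 0 < f x)
    (hsa : ∀ A B : Matrix (Fin n) (Fin n) ℂ,
      (σ * (K A)ᴴ * fDelta hσ f B).trace = (σ * Aᴴ * fDelta hσ f (K B)).trace) :
    ∀ g : ℝ → ℝ, (∀ x : ℝ, 0 < x → 0 < g x) →
      ∀ A B : Matrix (Fin n) (Fin n) ℂ,
        (σ * (K A)ᴴ * fDelta hσ g B).trace = (σ * Aᴴ * fDelta hσ g (K B)).trace := by
  intro g _ A B
  have hg : ∀ C, fDelta hσ g C = fDelta hσ f (fDelta hσ (fun x => g x / f x) C) :=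
    fDelta_eq_fDelta_fDelta_div hσ (fun x hx => (hf x hx).ne') g
  rw [hg, hg, hsa, map_fDelta_of_commute hσ K hcomm]

/-- If `K` commutes with `Δ_σ` and is self-adjoint with respect to
`⟨A,B⟩_f = Tr[σ A* f(Δ_σ)(B)]` for some positive function `f`, then `K` is self-adjoint
with respect to `⟨·,·⟩_g` for every positive function `g`. -/
theorem selfAdjoint_f_implies_selfAdjoint_g {n : ℕ}
    (σ : Matrix (Fin n) (Fin n) ℂ) (hσ : σ.PosDef) (hTr : σ.trace = 1)
    (K : Matrix (Fin n) (Fin n) ℂ →ₗ[ℂ] Matrix (Fin n) (Fin n) ℂ)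
    (hcomm : ∀ A, K (σ * A * σ⁻¹) = σ * K A * σ⁻¹)
    (f : ℝ → ℝ) (hf : ∀ x : ℝ, 0 < x → 0 < f x)
    (hsa : ∀ A B : Matrix (Fin n) (Fin n) ℂ,
      (σ * (K A)ᴴ * fDelta hσ f B).trace = (σ * Aᴴ * fDelta hσ f (K B)).trace) :
    ∀ g : ℝ → ℝ, (∀ x : ℝ, 0 < x → 0 < g x) →
      ∀ A B : Matrix (Fin n) (Fin n) ℂ,
        (σ * (K A)ᴴ * fDelta hσ g B).trace = (σ * Aᴴ * fDelta hσ g (K B)).trace :=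
  selfAdjoint_f_implies_selfAdjoint_g_general σ hσ K hcomm f hf hsa
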